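/- Let G and H be ample groupoids with σ-compact unit spaces and let Z be a G–H equivalence. Then there exists an open subset Y ⊆ Z such that the anchor maps r : Z → G⁰ and s : Z → H⁰ restrict to injections on Y, the set r(Y) is clopen in G⁰ and G-full, and the set s(Y) is clopen in H⁰ and H-full. -/

import Mathlib

universe u v w

/-- An (algebraic) groupoid structure on a type `G` of arrows.  The multiplication is a total
function, but all axioms involving `mul a b` are only imposed when `a` and `b` are composable,
i.e. when `src a = rng b`.  Units are the common values of `src` and `rng`. -/
structure GroupoidStruct (G : Type u) where
  src : G → G
  rng : G → G
  mul : G → G → G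
  inv : G → G
  src_src : ∀ a, src (src a) = src a
  rng_src : ∀ a, rng (src a) = src a
  src_rng : ∀ a, src (rng a) = rng a
  rng_rng : ∀ a, rng (rng a) = rng a
  mul_assoc : ∀ a b c, src a = rng b → src b = rng c → mul (mul a b) c = mul a (mul b c)
  src_mul : ∀ a b, src a = rng b → src (mul a b) = src b
  rng_mul : ∀ a b, src a = rng b → rng (mul a b) = rng a
  mul_src : ∀ a, mul a (src a) = a
  rng_mul_self : ∀ a, mul (rng a) a = a
  src_inv : ∀ a, src (inv a) = rng a
  rng_inv : ∀ a, rng (inv a) = src a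
  mul_inv : ∀ a, mul a (inv a) = rng a
  inv_mul : ∀ a, mul (inv a) a = src a

namespace GroupoidStruct

variable {G : Type u} {H : Type v}

/-- The unit space `G⁰` of a groupoid. -/
def units (S : GroupoidStruct G) : Set G := {x | S.src x = x ∧ S.rng x = x}

/-- The range map, viewed as a map `G → G⁰`. -/
def rngMap (S : GroupoidStruct G) (g : G) : S.units := ⟨S.rng g, S.src_rng g, S.rng_rng g⟩

/-- The source map, viewed as a map `G → G⁰`. -/
def srcMap (S : GroupoidStruct G) (g : G) : S.units := ⟨S.src g, S.src_src g, S.rng_src g⟩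

/-- A topological groupoid: inversion is continuous and multiplication is continuous on the
set of composable pairs. -/
structure IsTopologicalGroupoid [TopologicalSpace G] (S : GroupoidStruct G) : Prop where
  continuous_inv : Continuous S.inv
  continuousOn_mul :
    ContinuousOn (fun p : G × G => S.mul p.1 p.2) {p : G × G | S.src p.1 = S.rng p.2}

/-- An ample groupoid: a topological groupoid whose topology has a basis of compact open sets,
whose unit space is Hausdorff, and whose range and source maps are local homeomorphisms onto
the unit space. -/
structure IsAmple [TopologicalSpace G] (S : GroupoidStruct G)
    extends IsTopologicalGroupoid S : Prop where
  compact_open_basis : ∃ B : Set (Set G),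
    (∀ U ∈ B, IsCompact U ∧ IsOpen U) ∧ TopologicalSpace.IsTopologicalBasis B
  t2_units : T2Space S.units
  isLocalHomeomorph_rngMap : IsLocalHomeomorph S.rngMap
  isLocalHomeomorph_srcMap : IsLocalHomeomorph S.srcMap

/-- `K ⊆ G⁰` is `G`-full if `r(GK) = G⁰`, where `GK = s⁻¹(K)`. -/
def IsFull (S : GroupoidStruct G) (K : Set G) : Prop := S.rng '' (S.src ⁻¹' K) = S.units

/-- `K` is an open subset of the unit space (in the subspace topology of `G⁰`). -/
def IsUnitOpen [TopologicalSpace G] (S : GroupoidStruct G) (K : Set G) : Prop :=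
  K ⊆ S.units ∧ IsOpen {x : S.units | (x : G) ∈ K}

/-- `K` is a clopen subset of the unit space (in the subspace topology of `G⁰`). -/
def IsUnitClopen [TopologicalSpace G] (S : GroupoidStruct G) (K : Set G) : Prop :=
  K ⊆ S.units ∧ IsClopen {x : S.units | (x : G) ∈ K}

/-- `K` is a compact open subset of the unit space. -/
def IsUnitCompactOpen [TopologicalSpace G] (S : GroupoidStruct G) (K : Set G) : Prop :=
  K ⊆ S.units ∧ IsCompact K ∧ IsOpen {x : S.units | (x : G) ∈ K}

/-- An open bisection: an open set on which both the range and the source map restrict to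
homeomorphisms onto their images (i.e. are topological embeddings). -/
def IsOpenBisection [TopologicalSpace G] (S : GroupoidStruct G) (U : Set G) : Prop :=
  IsOpen U ∧ Topology.IsEmbedding (U.restrict S.rng) ∧ Topology.IsEmbedding (U.restrict S.src)

/-- A compact open bisection. -/
def IsCompactOpenBisection [TopologicalSpace G] (S : GroupoidStruct G) (U : Set G) : Prop :=
  IsCompact U ∧ S.IsOpenBisection U

/-- The product of two groupoids, with coordinatewise operations. -/
def prod (S : GroupoidStruct G) (T : GroupoidStruct H) : GroupoidStruct (G × H) where
  src p := (S.src p.1, T.src p.2)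
  rng p := (S.rng p.1, T.rng p.2)
  mul p q := (S.mul p.1 q.1, T.mul p.2 q.2)
  inv p := (S.inv p.1, T.inv p.2)
  src_src a := Prod.ext_iff.mpr ⟨S.src_src _, T.src_src _⟩
  rng_src a := Prod.ext_iff.mpr ⟨S.rng_src _, T.rng_src _⟩
  src_rng a := Prod.ext_iff.mpr ⟨S.src_rng _, T.src_rng _⟩
  rng_rng a := Prod.ext_iff.mpr ⟨S.rng_rng _, T.rng_rng _⟩
  mul_assoc a b c h1 h2 := by
    obtain ⟨h1a, h1b⟩ := Prod.ext_iff.mp h1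
    obtain ⟨h2a, h2b⟩ := Prod.ext_iff.mp h2
    exact Prod.ext_iff.mpr ⟨S.mul_assoc _ _ _ h1a h2a, T.mul_assoc _ _ _ h1b h2b⟩
  src_mul a b h := by
    obtain ⟨ha, hb⟩ := Prod.ext_iff.mp h
    exact Prod.ext_iff.mpr ⟨S.src_mul _ _ ha, T.src_mul _ _ hb⟩
  rng_mul a b h := by
    obtain ⟨ha, hb⟩ := Prod.ext_iff.mp h
    exact Prod.ext_iff.mpr ⟨S.rng_mul _ _ ha, T.rng_mul _ _ hb⟩
  mul_src a := Prod.ext_iff.mpr ⟨S.mul_src _, T.mul_src _⟩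
  rng_mul_self a := Prod.ext_iff.mpr ⟨S.rng_mul_self _, T.rng_mul_self _⟩
  src_inv a := Prod.ext_iff.mpr ⟨S.src_inv _, T.src_inv _⟩
  rng_inv a := Prod.ext_iff.mpr ⟨S.rng_inv _, T.rng_inv _⟩
  mul_inv a := Prod.ext_iff.mpr ⟨S.mul_inv _, T.mul_inv _⟩
  inv_mul a := Prod.ext_iff.mpr ⟨S.inv_mul _, T.inv_mul _⟩

/-- The full equivalence relation `ℛ = ℕ × ℕ`, regarded as a (discrete, principal) groupoid
with unit space `ℕ`. -/
def Rho : GroupoidStruct (ℕ × ℕ) where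
  src p := (p.2, p.2)
  rng p := (p.1, p.1)
  mul p q := (p.1, q.2)
  inv p := (p.2, p.1)
  src_src _ := rfl
  rng_src _ := rfl
  src_rng _ := rfl
  rng_rng _ := rfl
  mul_assoc _ _ _ _ _ := rfl
  src_mul _ _ _ := rfl
  rng_mul _ _ _ := rfl
  mul_src _ := rfl
  rng_mul_self _ := rfl
  src_inv _ := rfl
  rng_inv _ := rfl
  mul_inv _ := rfl
  inv_mul _ := rfl

/-- An isomorphism of topological groupoids: a homeomorphism of the arrow spaces respecting
all the groupoid operations. -/
structure GroupoidIso [TopologicalSpace G] [TopologicalSpace H]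
    (S : GroupoidStruct G) (T : GroupoidStruct H) extends G ≃ₜ H where
  map_mul : ∀ a b, S.src a = S.rng b →
    toHomeomorph (S.mul a b) = T.mul (toHomeomorph a) (toHomeomorph b)
  map_inv : ∀ a, toHomeomorph (S.inv a) = T.inv (toHomeomorph a)
  map_src : ∀ a, toHomeomorph (S.src a) = T.src (toHomeomorph a)
  map_rng : ∀ a, toHomeomorph (S.rng a) = T.rng (toHomeomorph a)

/-- The arrow space `G|_K = r⁻¹(K) ∩ s⁻¹(K)` of the restriction of `G` to `K ⊆ G⁰`,
with the subspace topology. -/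
abbrev Restrict (S : GroupoidStruct G) (K : Set G) : Type u :=
  {g : G // S.rng g ∈ K ∧ S.src g ∈ K}

variable (S : GroupoidStruct G) (K : Set G)

def rsrc (a : S.Restrict K) : S.Restrict K :=
  ⟨S.src a.1, by rw [S.rng_src]; exact a.2.2, by rw [S.src_src]; exact a.2.2⟩

def rrng (a : S.Restrict K) : S.Restrict K :=
  ⟨S.rng a.1, by rw [S.rng_rng]; exact a.2.1, by rw [S.src_rng]; exact a.2.1⟩

def rinv (a : S.Restrict K) : S.Restrict K :=
  ⟨S.inv a.1, by rw [S.rng_inv]; exact a.2.2, by rw [S.src_inv]; exact a.2.1⟩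

open Classical in
noncomputable def rmul (a b : S.Restrict K) : S.Restrict K :=
  if h : S.src a.1 = S.rng b.1 then
    ⟨S.mul a.1 b.1, by rw [S.rng_mul _ _ h]; exact a.2.1, by rw [S.src_mul _ _ h]; exact b.2.2⟩
  else a

@[simp] lemma rsrc_val (a : S.Restrict K) : (S.rsrc K a).1 = S.src a.1 := rfl
@[simp] lemma rrng_val (a : S.Restrict K) : (S.rrng K a).1 = S.rng a.1 := rfl
@[simp] lemma rinv_val (a : S.Restrict K) : (S.rinv K a).1 = S.inv a.1 := rfl

lemma rmul_val (a b : S.Restrict K) (h : S.src a.1 = S.rng b.1) :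
    (S.rmul K a b).1 = S.mul a.1 b.1 := by
  unfold rmul
  rw [dif_pos h]

/-- The restriction `G|_K` of a groupoid to a subset `K` of its unit space. -/
noncomputable def restrict : GroupoidStruct (S.Restrict K) where
  src := S.rsrc K
  rng := S.rrng K
  mul := S.rmul K
  inv := S.rinv K
  src_src a := Subtype.ext (S.src_src a.1)
  rng_src a := Subtype.ext (S.rng_src a.1)
  src_rng a := Subtype.ext (S.src_rng a.1)
  rng_rng a := Subtype.ext (S.rng_rng a.1)
  mul_assoc a b c h1 h2 := by
    have h1' : S.src a.1 = S.rng b.1 := congrArg Subtype.val h1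
    have h2' : S.src b.1 = S.rng c.1 := congrArg Subtype.val h2
    have hab := S.rmul_val K a b h1'
    have hbc := S.rmul_val K b c h2'
    apply Subtype.ext
    calc (S.rmul K (S.rmul K a b) c).1
        = S.mul (S.rmul K a b).1 c.1 :=
          S.rmul_val K _ _ (by rw [hab, S.src_mul _ _ h1']; exact h2')
      _ = S.mul (S.mul a.1 b.1) c.1 := by rw [hab]
      _ = S.mul a.1 (S.mul b.1 c.1) := S.mul_assoc _ _ _ h1' h2'
      _ = S.mul a.1 (S.rmul K b c).1 := by rw [hbc]
      _ = (S.rmul K a (S.rmul K b c)).1 :=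
          (S.rmul_val K _ _ (by rw [hbc, S.rng_mul _ _ h2']; exact h1')).symm
  src_mul a b h := by
    have h' : S.src a.1 = S.rng b.1 := congrArg Subtype.val h
    apply Subtype.ext
    show S.src (S.rmul K a b).1 = S.src b.1
    rw [S.rmul_val K a b h', S.src_mul _ _ h']
  rng_mul a b h := by
    have h' : S.src a.1 = S.rng b.1 := congrArg Subtype.val h
    apply Subtype.ext
    show S.rng (S.rmul K a b).1 = S.rng a.1
    rw [S.rmul_val K a b h', S.rng_mul _ _ h']
  mul_src a := by
    apply Subtype.ext
    rw [S.rmul_val K a _ (by rw [rsrc_val, S.rng_src]), rsrc_val]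
    exact S.mul_src a.1
  rng_mul_self a := by
    apply Subtype.ext
    rw [S.rmul_val K _ a (by rw [rrng_val, S.src_rng]), rrng_val]
    exact S.rng_mul_self a.1
  src_inv a := Subtype.ext (S.src_inv a.1)
  rng_inv a := Subtype.ext (S.rng_inv a.1)
  mul_inv a := by
    apply Subtype.ext
    rw [S.rmul_val K a _ (by rw [rinv_val, S.rng_inv]), rinv_val]
    exact S.mul_inv a.1
  inv_mul a := by
    apply Subtype.ext
    rw [S.rmul_val K _ a (by rw [rinv_val, S.src_inv]), rinv_val]
    exact S.inv_mul a.1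

variable {S K}

/-- The data of a groupoid equivalence between `G` and `H`: a space `Z` carrying commuting
free and proper continuous actions of `G` (on the left) and `H` (on the right), whose anchor
maps `ρ : Z → G⁰` and `σ : Z → H⁰` induce homeomorphisms `Z/H ≅ G⁰` and `G\Z ≅ H⁰`.
The latter conditions are encoded by requiring that the fibres of `ρ` are exactly the
`H`-orbits, that `ρ` is surjective onto `G⁰`, and that `ρ` is a topological quotient map onto
`G⁰` (and symmetrically for `σ`): this says precisely that the induced map `Z/H → G⁰` is a
homeomorphism. -/
structure GroupoidEquivalenceData [TopologicalSpace G] [TopologicalSpace H]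
    (S : GroupoidStruct G) (T : GroupoidStruct H) (Z : Type w) [TopologicalSpace Z] where
  ρ : Z → G
  σ : Z → H
  ρ_unit : ∀ z, ρ z ∈ S.units
  σ_unit : ∀ z, σ z ∈ T.units
  continuous_ρ : Continuous ρ
  continuous_σ : Continuous σ
  actL : G → Z → Z
  actR : Z → H → Z
  ρ_actL : ∀ g z, S.src g = ρ z → ρ (actL g z) = S.rng g
  σ_actL : ∀ g z, S.src g = ρ z → σ (actL g z) = σ z
  actL_unit : ∀ z, actL (ρ z) z = z
  actL_mul : ∀ g g' z, S.src g = S.rng g' → S.src g' = ρ z →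
    actL (S.mul g g') z = actL g (actL g' z)
  σ_actR : ∀ z h, σ z = T.rng h → σ (actR z h) = T.src h
  ρ_actR : ∀ z h, σ z = T.rng h → ρ (actR z h) = ρ z
  actR_unit : ∀ z, actR z (σ z) = z
  actR_mul : ∀ z h h', σ z = T.rng h → T.src h = T.rng h' →
    actR (actR z h) h' = actR z (T.mul h h')
  act_comm : ∀ g z h, S.src g = ρ z → σ z = T.rng h →
    actL g (actR z h) = actR (actL g z) h
  continuousOn_actL :
    ContinuousOn (fun p : G × Z => actL p.1 p.2) {p : G × Z | S.src p.1 = ρ p.2}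
  continuousOn_actR :
    ContinuousOn (fun p : Z × H => actR p.1 p.2) {p : Z × H | σ p.1 = T.rng p.2}
  free_actL : ∀ g z, S.src g = ρ z → actL g z = z → g = ρ z
  free_actR : ∀ z h, σ z = T.rng h → actR z h = z → h = σ z
  proper_actL : IsProperMap (fun p : {q : G × Z // S.src q.1 = ρ q.2} =>
    ((actL p.1.1 p.1.2, p.1.2) : Z × Z))
  proper_actR : IsProperMap (fun p : {q : Z × H // σ q.1 = T.rng q.2} =>
    ((actR p.1.1 p.1.2, p.1.1) : Z × Z))
  ρ_fiber_orbit : ∀ z z', ρ z = ρ z' ↔ ∃ h, σ z = T.rng h ∧ z' = actR z h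
  σ_fiber_orbit : ∀ z z', σ z = σ z' ↔ ∃ g, S.src g = ρ z ∧ z' = actL g z
  ρ_surj : Set.range ρ = S.units
  σ_surj : Set.range σ = T.units
  quotient_ρ : Topology.IsQuotientMap (fun z => (⟨ρ z, ρ_unit z⟩ : S.units))
  quotient_σ : Topology.IsQuotientMap (fun z => (⟨σ z, σ_unit z⟩ : T.units))

/-- `G` and `H` are groupoid equivalent if there exists a `G`–`H` equivalence. -/
def GroupoidEquivalent [TopologicalSpace G] [TopologicalSpace H]
    (S : GroupoidStruct G) (T : GroupoidStruct H) : Prop :=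
  ∃ (Z : Type (max u v)) (_ : TopologicalSpace Z), Nonempty (GroupoidEquivalenceData S T Z)

/-- Kakutani equivalence of ample groupoids: there are full clopen subsets `X ⊆ G⁰`, `Y ⊆ H⁰`
with `G|_X ≅ H|_Y`. -/
def KakutaniEquivalent [TopologicalSpace G] [TopologicalSpace H]
    (S : GroupoidStruct G) (T : GroupoidStruct H) : Prop :=
  ∃ (X : Set G) (Y : Set H), S.IsUnitClopen X ∧ S.IsFull X ∧ T.IsUnitClopen Y ∧ T.IsFull Y ∧
    Nonempty (GroupoidIso (S.restrict X) (T.restrict Y))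

end GroupoidStruct

/-!
Properness and freeness of the actions make the diagonal open in the fibre products of `Z` over
`G⁰` and over `H⁰`, and the anchors are open maps, so `Z` has a basis of compact open slices:
compact open sets on which both anchors are injective. Exhaust `G⁰` and `H⁰` by increasing compact
open sets `Aₙ`, `Bₙ` and build increasing compact open slices `Yₙ` whose anchor images meet every
orbit through `Aₙ`, resp. `Bₙ`. Points of `Z` whose orbits are not yet met by `Yₙ` have anchors
outside `Aₙ` and `Bₙ`, so the pieces added at stage `n + 1` can be kept off `Aₙ` and `Bₙ`. Hence
the anchor image of `⋃ Yₙ` agrees on `Aₙ` with the compact image of `Yₙ`: it is closed as well as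
open, and it is full because it meets every orbit. Everything is symmetric in `G` and `H`, since
`Z` is also an `H`–`G` equivalence.
-/

open Set Topology

theorem exists_seq_of_exists_succ {α : Type*} {P : ℕ → α → Prop} {R : ℕ → α → α → Prop}
    {a : α} (ha : P 0 a) (h : ∀ n x, P n x → ∃ y, P (n + 1) y ∧ R n x y) :
    ∃ f : ℕ → α, (∀ n, P n (f n)) ∧ ∀ n, R n (f n) (f (n + 1)) := by
  choose! g hgP hgR using h
  let f : ℕ → α := fun n => Nat.rec a (fun k x => g k x) n
  have hf : ∀ n, P n (f n) := fun n => by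
    induction n with
    | zero => exact ha
    | succ k ih => exact hgP k _ ih
  exact ⟨f, hf, fun n => hgR n _ (hf n)⟩

theorem exists_monotone_isCompact_isOpen_cover {X : Type*} [TopologicalSpace X]
    [SigmaCompactSpace X] (h : ∀ x : X, ∃ U, IsCompact U ∧ IsOpen U ∧ x ∈ U) :
    ∃ A : ℕ → Set X, Monotone A ∧ (∀ n, IsCompact (A n)) ∧ (∀ n, IsOpen (A n)) ∧
      ⋃ n, A n = univ := by
  have hsuperset : ∀ K : Set X, IsCompact K → ∃ U, IsCompact U ∧ IsOpen U ∧ K ⊆ U := by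
    intro K hK
    choose U hUc hUo hxU using h
    obtain ⟨t, ht⟩ := hK.elim_finite_subcover U hUo fun x _ => mem_iUnion.2 ⟨x, hxU x⟩
    exact ⟨⋃ x ∈ t, U x, t.isCompact_biUnion fun x _ => hUc x, isOpen_biUnion fun x _ => hUo x,
      ht⟩
  choose U hUc hUo hKU using fun n => hsuperset _ (isCompact_compactCovering X n)
  refine ⟨accumulate U, monotone_accumulate, fun n => ?_, fun n => ?_, ?_⟩
  · rw [accumulate_def]
    exact (finite_le_nat n).isCompact_biUnion fun m _ => hUc m
  · rw [accumulate_def]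
    exact isOpen_biUnion fun m _ => hUo m
  · rw [iUnion_accumulate]
    exact eq_univ_of_univ_subset ((iUnion_compactCovering X).symm.subset.trans (iUnion_mono hKU))

theorem isClosed_iUnion_of_inter_subset {X : Type*} [TopologicalSpace X] {K A : ℕ → Set X}
    (hK : Monotone K) (hA : Monotone A) (hKc : ∀ n, IsClosed (K n)) (hAo : ∀ n, IsOpen (A n))
    (hcover : ⋃ n, A n = univ) (hstab : ∀ n, K (n + 1) ∩ A n ⊆ K n) :
    IsClosed (⋃ n, K n) := by
  have hstab' : ∀ m n, K n ∩ A m ⊆ K m := by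
    intro m n
    rcases le_total n m with hnm | hmn
    · exact inter_subset_left.trans (hK hnm)
    induction n, hmn using Nat.le_induction with
    | base => exact inter_subset_left
    | succ n hmn ih => exact fun x hx => ih ⟨hstab n ⟨hx.1, hA hmn hx.2⟩, hx.2⟩
  have hcompl : (⋃ n, K n)ᶜ = ⋃ m, A m ∩ (K m)ᶜ := by
    ext x
    simp only [mem_compl_iff, mem_iUnion, not_exists, mem_inter_iff]
    constructor
    · intro hx
      obtain ⟨m, hm⟩ := mem_iUnion.mp (hcover ▸ mem_univ x)
      exact ⟨m, hm, hx m⟩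
    · rintro ⟨m, hm, hxm⟩ n hn
      exact hxm (hstab' m n ⟨hn, hm⟩)
  rw [← isOpen_compl_iff, hcompl]
  exact isOpen_iUnion fun m => (hAo m).inter (hKc m).isOpen_compl

namespace GroupoidStruct

variable {G : Type u} (S : GroupoidStruct G)

theorem eq_inv_of_mul_eq_src {a x : G} (hx : S.src x = S.rng a) (h : S.mul x a = S.src a) :
    x = S.inv a :=
  calc x = S.mul x (S.mul a (S.inv a)) := by rw [S.mul_inv, ← hx, S.mul_src]
    _ = S.mul (S.mul x a) (S.inv a) := (S.mul_assoc _ _ _ hx (S.rng_inv a).symm).symm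
    _ = S.inv a := by rw [h, ← S.rng_inv, S.rng_mul_self]

theorem inv_inv (a : G) : S.inv (S.inv a) = a :=
  (S.eq_inv_of_mul_eq_src (S.rng_inv a).symm ((S.mul_inv a).trans (S.src_inv a).symm)).symm

theorem inv_eq_self_of_mem_units {u : G} (hu : u ∈ S.units) : S.inv u = u := by
  have huu := S.mul_src u
  rw [hu.1] at huu
  exact (S.eq_inv_of_mul_eq_src (hu.1.trans hu.2.symm) (huu.trans hu.1.symm)).symm

theorem mul_inv_rev {a b : G} (hab : S.src a = S.rng b) :
    S.inv (S.mul a b) = S.mul (S.inv b) (S.inv a) := by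
  have hba : S.src (S.inv b) = S.rng (S.inv a) := by rw [S.src_inv, S.rng_inv, hab]
  refine (S.eq_inv_of_mul_eq_src ?_ ?_).symm
  · rw [S.src_mul _ _ hba, S.src_inv, S.rng_mul _ _ hab]
  · rw [S.mul_assoc _ _ _ hba (by rw [S.src_inv, S.rng_mul _ _ hab]),
      ← S.mul_assoc _ _ _ (S.src_inv a) hab, S.inv_mul, hab, S.rng_mul_self, S.inv_mul,
      S.src_mul _ _ hab]

def invSwapHomeomorph {Z : Type w} [TopologicalSpace G] [TopologicalSpace Z]
    (hS : Continuous S.inv) (f : Z → G) :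
    {q : G × Z // S.src q.1 = f q.2} ≃ₜ {q : Z × G // f q.1 = S.rng q.2} where
  toFun p := ⟨(p.1.2, S.inv p.1.1), ((S.rng_inv _).trans p.2).symm⟩
  invFun q := ⟨(S.inv q.1.2, q.1.1), (S.src_inv _).trans q.2.symm⟩
  left_inv _ := Subtype.ext (Prod.ext (S.inv_inv _) rfl)
  right_inv _ := Subtype.ext (Prod.ext rfl (S.inv_inv _))
  continuous_toFun := ((continuous_snd.comp continuous_subtype_val).prodMk
    (hS.comp (continuous_fst.comp continuous_subtype_val))).subtype_mk _
  continuous_invFun := ((hS.comp (continuous_snd.comp continuous_subtype_val)).prodMk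
    (continuous_fst.comp continuous_subtype_val)).subtype_mk _

def saturation (K : Set S.units) : Set S.units := S.rngMap '' (S.srcMap ⁻¹' K)

variable {S}

theorem subset_saturation (K : Set S.units) : K ⊆ S.saturation K :=
  fun u hu => ⟨u, mem_preimage.2 (by rwa [show S.srcMap u = u from Subtype.ext u.2.1]),
    Subtype.ext u.2.2⟩

theorem saturation_mono {K L : Set S.units} (h : K ⊆ L) : S.saturation K ⊆ S.saturation L :=
  image_mono (preimage_mono h)

theorem saturation_subset_saturation {K L : Set S.units} (h : K ⊆ S.saturation L) :
    S.saturation K ⊆ S.saturation L := by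
  rintro _ ⟨g, hg, rfl⟩
  obtain ⟨k, hk, hkg⟩ := h hg
  have hgk : S.src g = S.rng k := (congrArg Subtype.val hkg).symm
  refine ⟨S.mul g k, ?_, Subtype.ext (S.rng_mul _ _ hgk)⟩
  rw [mem_preimage, show S.srcMap (S.mul g k) = S.srcMap k from Subtype.ext (S.src_mul _ _ hgk)]
  exact hk

theorem isOpen_saturation [TopologicalSpace G] (hr : IsOpenMap S.rngMap)
    (hs : Continuous S.srcMap) {K : Set S.units} (hK : IsOpen K) :
    IsOpen (S.saturation K) :=
  hr _ (hK.preimage hs)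

theorem isFull_image_val_of_saturation_eq_univ {K : Set S.units} (h : S.saturation K = univ) :
    S.IsFull (Subtype.val '' K) := by
  refine Subset.antisymm (fun _ ⟨g, _, hg⟩ => hg ▸ (S.rngMap g).2) fun u hu => ?_
  obtain ⟨g, hg, hgu⟩ := h.symm.subset (mem_univ ⟨u, hu⟩)
  exact ⟨g, ⟨_, hg, rfl⟩, congrArg Subtype.val hgu⟩

theorem isUnitClopen_image_val [TopologicalSpace G] {K : Set S.units} (h : IsClopen K) :
    S.IsUnitClopen (Subtype.val '' K) := by
  refine ⟨Subtype.coe_image_subset _ _, ?_⟩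
  rwa [show {x : S.units | (x : G) ∈ Subtype.val '' K} = K from
    Subtype.val_injective.preimage_image K]

theorem isOpen_units [TopologicalSpace G] (h : IsLocalHomeomorph S.rngMap) : IsOpen S.units := by
  have hrng : Continuous S.rng := continuous_subtype_val.comp h.continuous
  have hfix : S.rngMap ∘ S.rng = S.rngMap ∘ id :=
    funext fun g => Subtype.ext (S.rng_rng g)
  convert h.isLocallyInjective.isOpen_eqLocus hrng continuous_id hfix using 1
  ext g
  exact ⟨fun hg => hg.2, fun (hg : S.rng g = g) => ⟨hg ▸ S.src_rng g, hg⟩⟩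

theorem IsAmple.exists_isCompact_isOpen_mem_subset [TopologicalSpace G] (hS : S.IsAmple)
    {x : S.units} {O : Set S.units} (hO : IsOpen O) (hx : x ∈ O) :
    ∃ A, IsCompact A ∧ IsOpen A ∧ x ∈ A ∧ A ⊆ O := by
  obtain ⟨B, hBco, hB⟩ := hS.compact_open_basis
  have hO' : IsOpen (Subtype.val '' O) :=
    (isOpen_units hS.isLocalHomeomorph_rngMap).isOpenMap_subtype_val _ hO
  obtain ⟨U, hUB, hxU, hUO⟩ := hB.exists_subset_of_mem_open (mem_image_of_mem _ hx) hO'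
  refine ⟨Subtype.val ⁻¹' U, IsInducing.subtypeVal.isCompact_preimage' (hBco U hUB).1
    (hUO.trans (image_subset_range _ _)), (hBco U hUB).2.preimage continuous_subtype_val, hxU,
    fun a ha => ?_⟩
  obtain ⟨b, hb, hba⟩ := hUO ha
  exact Subtype.val_injective hba ▸ hb

theorem IsAmple.exists_monotone_isCompact_isOpen_cover [TopologicalSpace G] (hS : S.IsAmple)
    (hSc : IsSigmaCompact S.units) :
    ∃ A : ℕ → Set S.units, Monotone A ∧ (∀ n, IsCompact (A n)) ∧ (∀ n, IsOpen (A n)) ∧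
      ⋃ n, A n = univ := by
  have := isSigmaCompact_iff_sigmaCompactSpace.mp hSc
  refine _root_.exists_monotone_isCompact_isOpen_cover fun x => ?_
  obtain ⟨A, hAc, hAo, hxA, -⟩ := hS.exists_isCompact_isOpen_mem_subset isOpen_univ (mem_univ x)
  exact ⟨A, hAc, hAo, hxA⟩

end GroupoidStruct

namespace GroupoidStruct.GroupoidEquivalenceData

variable {G : Type u} {H : Type v} {Z : Type w} [TopologicalSpace G] [TopologicalSpace H]
  [TopologicalSpace Z] {S : GroupoidStruct G} {T : GroupoidStruct H}
  (E : GroupoidEquivalenceData S T Z)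

def symm (hS : Continuous S.inv) (hT : Continuous T.inv) : GroupoidEquivalenceData T S Z where
  ρ := E.σ
  σ := E.ρ
  ρ_unit := E.σ_unit
  σ_unit := E.ρ_unit
  continuous_ρ := E.continuous_σ
  continuous_σ := E.continuous_ρ
  actL h z := E.actR z (T.inv h)
  actR z g := E.actL (S.inv g) z
  ρ_actL h z hz := (E.σ_actR z _ ((T.rng_inv h).trans hz).symm).trans (T.src_inv h)
  σ_actL h z hz := E.ρ_actR z _ ((T.rng_inv h).trans hz).symm
  actL_unit z := by rw [T.inv_eq_self_of_mem_units (E.σ_unit z), E.actR_unit]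
  actL_mul h h' z hh hz := by
    rw [T.mul_inv_rev hh, E.actR_mul z _ _ ((T.rng_inv h').trans hz).symm
      ((T.src_inv h').trans ((T.rng_inv h).trans hh).symm)]
  σ_actR z g hz := (E.ρ_actL _ z ((S.src_inv g).trans hz.symm)).trans (S.rng_inv g)
  ρ_actR z g hz := E.σ_actL _ z ((S.src_inv g).trans hz.symm)
  actR_unit z := by rw [S.inv_eq_self_of_mem_units (E.ρ_unit z), E.actL_unit]
  actR_mul z g g' hz hg := by
    rw [S.mul_inv_rev hg, E.actL_mul _ _ z ((S.src_inv g').trans ((S.rng_inv g).trans hg).symm)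
      ((S.src_inv g).trans hz.symm)]
  act_comm h z g hh hg :=
    (E.act_comm _ z _ ((S.src_inv g).trans hg.symm) ((T.rng_inv h).trans hh).symm).symm
  continuousOn_actL := E.continuousOn_actR.comp
    (continuous_snd.prodMk (hT.comp continuous_fst)).continuousOn
    fun p hp => ((T.rng_inv p.1).trans hp).symm
  continuousOn_actR := E.continuousOn_actL.comp
    ((hS.comp continuous_snd).prodMk continuous_fst).continuousOn
    fun p hp => (S.src_inv p.2).trans hp.symm
  free_actL h z hz hfix := by
    rw [← T.inv_inv h, E.free_actR z _ ((T.rng_inv h).trans hz).symm hfix,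
      T.inv_eq_self_of_mem_units (E.σ_unit z)]
  free_actR z g hz hfix := by
    rw [← S.inv_inv g, E.free_actL _ z ((S.src_inv g).trans hz.symm) hfix,
      S.inv_eq_self_of_mem_units (E.ρ_unit z)]
  proper_actL := E.proper_actR.comp (T.invSwapHomeomorph hT E.σ).isHomeomorph.isProperMap
  proper_actR := E.proper_actL.comp (S.invSwapHomeomorph hS E.ρ).symm.isHomeomorph.isProperMap
  ρ_fiber_orbit z z' := (E.σ_fiber_orbit z z').trans
    ⟨fun ⟨g, hg, hz'⟩ => ⟨S.inv g, by rw [S.rng_inv, hg], by rw [S.inv_inv, hz']⟩,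
      fun ⟨g, hg, hz'⟩ => ⟨S.inv g, by rw [S.src_inv, hg], hz'⟩⟩
  σ_fiber_orbit z z' := (E.ρ_fiber_orbit z z').trans
    ⟨fun ⟨h, hh, hz'⟩ => ⟨T.inv h, by rw [T.src_inv, hh], by rw [T.inv_inv, hz']⟩,
      fun ⟨h, hh, hz'⟩ => ⟨T.inv h, by rw [T.rng_inv, hh], hz'⟩⟩
  ρ_surj := E.σ_surj
  σ_surj := E.ρ_surj
  quotient_ρ := E.quotient_σ
  quotient_σ := E.quotient_ρ

def rhoUnit (z : Z) : S.units := ⟨E.ρ z, E.ρ_unit z⟩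

def sigmaUnit (z : Z) : T.units := ⟨E.σ z, E.σ_unit z⟩

theorem isQuotientMap_rhoUnit : IsQuotientMap E.rhoUnit := E.quotient_ρ

theorem continuous_rhoUnit : Continuous E.rhoUnit := E.quotient_ρ.continuous

theorem continuous_sigmaUnit : Continuous E.sigmaUnit := E.quotient_σ.continuous

theorem isOpenMap_rhoUnit (hT : IsOpenMap T.rngMap) : IsOpenMap E.rhoUnit := by
  -- a point `w` near `v • h` is moved into `V` by an arrow `k` near `h⁻¹`, which exists because
  -- `r` is open, and `ρ w = ρ (w • k)`
  intro V hV
  refine E.isQuotientMap_rhoUnit.isOpen_preimage.mp (isOpen_iff_mem_nhds.mpr ?_)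
  rintro _ ⟨v, hv, hvz⟩
  obtain ⟨h, hvh, rfl⟩ := (E.ρ_fiber_orbit v _).mp (congrArg Subtype.val hvz)
  have hcomp : E.σ (E.actR v h) = T.rng (T.inv h) := by rw [E.σ_actR v h hvh, T.rng_inv]
  have hback : E.actR (E.actR v h) (T.inv h) = v := by
    rw [E.actR_mul v h _ hvh (T.rng_inv h).symm, T.mul_inv, ← hvh, E.actR_unit]
  have hV' := E.continuousOn_actR (E.actR v h, T.inv h) hcomp
    (show V ∈ 𝓝 (E.actR (E.actR v h) (T.inv h)) by rw [hback]; exact hV.mem_nhds hv)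
  obtain ⟨N, hN, hNV⟩ := mem_nhdsWithin_iff_exists_mem_nhds_inter.mp hV'
  obtain ⟨O, hO, W, hW, hOW⟩ := mem_nhds_prod_iff.mp hN
  have hrW : T.rngMap '' W ∈ 𝓝 (E.sigmaUnit (E.actR v h)) := by
    convert hT.image_mem_nhds hW using 2
    exact Subtype.ext hcomp
  filter_upwards [hO, E.continuous_sigmaUnit.continuousAt hrW] with w hwO ⟨k, hkW, hkw⟩
  have hwk : E.σ w = T.rng k := (congrArg Subtype.val hkw).symm
  have hwkV : E.actR w k ∈ V := hNV (show (w, k) ∈ N ∩ _ from ⟨hOW ⟨hwO, hkW⟩, hwk⟩)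
  exact ⟨_, hwkV, Subtype.ext (E.ρ_actR w k hwk)⟩

theorem isLocallyInjective_ρ (hT : IsOpen T.units) : IsLocallyInjective E.ρ := by
  rw [isLocallyInjective_iff_isOpen_diagonal]
  let N : Set {q : Z × H // E.σ q.1 = T.rng q.2} := {p | p.1.2 ∉ T.units}
  have hN : IsClosed N := (hT.preimage (continuous_snd.comp continuous_subtype_val)).isClosed_compl
  -- pairs in a `ρ`-fibre are `(z • h, z)`, off the diagonal exactly when `h ∉ H⁰` (freeness);
  -- properness makes the set of those closed
  have hdiag : Function.pullbackDiagonal E.ρ =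
      Subtype.val ⁻¹' ((fun p : {q : Z × H // E.σ q.1 = T.rng q.2} =>
        ((E.actR p.1.1 p.1.2, p.1.1) : Z × Z)) '' N)ᶜ := by
    ext ⟨⟨z₁, z₂⟩, hρ⟩
    simp only [Function.pullbackDiagonal, Function.Pullback.fst, Function.Pullback.snd,
      mem_ofPred_eq, mem_preimage, mem_compl_iff, mem_image, Prod.mk.injEq, not_exists, not_and]
    constructor
    · rintro rfl ⟨⟨w, h⟩, hwh⟩ hh hfix rfl
      exact hh (E.free_actR w h hwh hfix ▸ E.σ_unit w)
    · intro hoff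
      obtain ⟨h, hh, rfl⟩ := (E.ρ_fiber_orbit z₂ z₁).mp hρ.symm
      by_contra hne
      have hunit : h ∈ T.units := not_not.mp fun hu => hoff ⟨(z₂, h), hh⟩ hu rfl rfl
      exact hne (by rw [← hunit.2, ← hh, E.actR_unit])
  rw [hdiag]
  exact (E.proper_actR.isClosedMap N hN).isOpen_compl.preimage continuous_subtype_val

theorem rhoUnit_mem_saturation_of_sigmaUnit_mem {Y : Set Z} {z : Z}
    (h : E.sigmaUnit z ∈ T.saturation (E.sigmaUnit '' Y)) :
    E.rhoUnit z ∈ S.saturation (E.rhoUnit '' Y) := by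
  obtain ⟨k, ⟨y, hy, hyk⟩, hkz⟩ := h
  have hyk' : E.σ y = T.rng (T.inv k) := (congrArg Subtype.val hyk).trans (T.rng_inv k).symm
  have hσ : E.σ (E.actR y (T.inv k)) = E.σ z := by
    rw [E.σ_actR _ _ hyk', T.src_inv]
    exact congrArg Subtype.val hkz
  obtain ⟨g, hg, hgz⟩ := (E.σ_fiber_orbit _ z).mp hσ
  refine ⟨g, ⟨y, hy, Subtype.ext ?_⟩, Subtype.ext ?_⟩
  · exact (E.ρ_actR _ _ hyk').symm.trans hg.symm
  · exact (E.ρ_actL _ _ hg).symm.trans (congrArg E.ρ hgz.symm)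

structure IsCompactOpenSlice (Y : Set Z) : Prop where
  isOpen : IsOpen Y
  isCompact : IsCompact Y
  injOn_ρ : InjOn E.ρ Y
  injOn_σ : InjOn E.σ Y

theorem isCompactOpenSlice_empty : E.IsCompactOpenSlice ∅ :=
  ⟨isOpen_empty, isCompact_empty, injOn_empty _, injOn_empty _⟩

theorem isCompactOpenSlice_symm_iff (hS : Continuous S.inv) (hT : Continuous T.inv)
    {Y : Set Z} : (E.symm hS hT).IsCompactOpenSlice Y ↔ E.IsCompactOpenSlice Y :=
  ⟨fun h => ⟨h.1, h.2, h.4, h.3⟩, fun h => ⟨h.1, h.2, h.4, h.3⟩⟩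

theorem exists_isCompactOpenSlice_mem_subset (hS : S.IsAmple) (hT : T.IsAmple) {O : Set Z}
    (hO : IsOpen O) {z : Z} (hz : z ∈ O) :
    ∃ V, E.IsCompactOpenSlice V ∧ z ∈ V ∧ V ⊆ O := by
  obtain ⟨U₁, hU₁, hzU₁, hinjρ⟩ :=
    E.isLocallyInjective_ρ (isOpen_units hT.isLocalHomeomorph_rngMap) z
  obtain ⟨U₂, hU₂, hzU₂, hinjσ⟩ :=
    (E.symm hS.continuous_inv hT.continuous_inv).isLocallyInjective_ρ
      (isOpen_units hS.isLocalHomeomorph_rngMap) z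
  set W := O ∩ U₁ ∩ U₂
  have hW : IsOpen W := (hO.inter hU₁).inter hU₂
  have hzW : z ∈ W := ⟨⟨hz, hzU₁⟩, hzU₂⟩
  have he : IsOpenEmbedding (W.domRestrict E.rhoUnit) :=
    .of_continuous_injective_isOpenMap (E.continuous_rhoUnit.comp continuous_subtype_val)
      (fun a b hab => Subtype.ext (hinjρ a.2.1.2 b.2.1.2 (congrArg Subtype.val hab)))
      ((E.isOpenMap_rhoUnit hT.isLocalHomeomorph_rngMap.isOpenMap).domRestrict hW)
  obtain ⟨A, hAc, hAo, hzA, hAW⟩ :=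
    hS.exists_isCompact_isOpen_mem_subset he.isOpenMap.isOpen_range (mem_range_self ⟨z, hzW⟩)
  refine ⟨Subtype.val '' (W.domRestrict E.rhoUnit ⁻¹' A),
    ⟨hW.isOpenMap_subtype_val _ (hAo.preimage he.continuous),
      (he.isInducing.isCompact_preimage' hAc hAW).image continuous_subtype_val,
      hinjρ.mono ?_, hinjσ.mono ?_⟩, ⟨⟨z, hzW⟩, hzA, rfl⟩, ?_⟩ <;>
  rintro _ ⟨⟨v, hv⟩, -, rfl⟩
  exacts [hv.1.2, hv.2, hv.1.1]

variable {E}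

theorem IsCompactOpenSlice.exists_extension_within_union (hS : S.IsAmple) (hT : T.IsAmple)
    {Y V : Set Z} (hY : E.IsCompactOpenSlice Y) (hV : E.IsCompactOpenSlice V) :
    ∃ Y', E.IsCompactOpenSlice Y' ∧ Y ⊆ Y' ∧ Y' ⊆ Y ∪ V ∧
      E.rhoUnit '' V ⊆ S.saturation (E.rhoUnit '' Y') := by
  have := hS.t2_units
  have := hT.t2_units
  have hρo : IsOpen (E.rhoUnit '' Y) :=
    E.isOpenMap_rhoUnit hT.isLocalHomeomorph_rngMap.isOpenMap _ hY.isOpen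
  have hσo : IsOpen (E.sigmaUnit '' Y) :=
    (E.symm hS.continuous_inv hT.continuous_inv).isOpenMap_rhoUnit
      hS.isLocalHomeomorph_rngMap.isOpenMap _ hY.isOpen
  have hρc : IsClosed (E.rhoUnit '' Y) := (hY.isCompact.image E.continuous_rhoUnit).isClosed
  have hσc : IsClosed (E.sigmaUnit '' Y) := (hY.isCompact.image E.continuous_sigmaUnit).isClosed
  set W := V ∩ (E.rhoUnit ⁻¹' (E.rhoUnit '' Y))ᶜ ∩ (E.sigmaUnit ⁻¹' (E.sigmaUnit '' Y))ᶜ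
  have hYW : Disjoint Y W := disjoint_left.mpr fun y hy hyW => hyW.1.2 ⟨y, hy, rfl⟩
  have hWo : IsOpen W := (hV.isOpen.inter (hρc.preimage E.continuous_rhoUnit).isOpen_compl).inter
    (hσc.preimage E.continuous_sigmaUnit).isOpen_compl
  have hWc : IsCompact W :=
    (hV.isCompact.inter_right (hρo.preimage E.continuous_rhoUnit).isClosed_compl).inter_right
      (hσo.preimage E.continuous_sigmaUnit).isClosed_compl
  refine ⟨Y ∪ W, ⟨hY.isOpen.union hWo, hY.isCompact.union hWc, ?_, ?_⟩, subset_union_left,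
    union_subset_union_right Y fun w hw => hw.1.1, ?_⟩
  · exact (injOn_union hYW).mpr ⟨hY.injOn_ρ, hV.injOn_ρ.mono fun w hw => hw.1.1,
      fun y hy w hw hyw => hw.1.2 ⟨y, hy, Subtype.ext hyw⟩⟩
  · exact (injOn_union hYW).mpr ⟨hY.injOn_σ, hV.injOn_σ.mono fun w hw => hw.1.1,
      fun y hy w hw hyw => hw.2 ⟨y, hy, Subtype.ext hyw⟩⟩
  rintro _ ⟨v, hv, rfl⟩
  have hmono : S.saturation (E.rhoUnit '' Y) ⊆ S.saturation (E.rhoUnit '' (Y ∪ W)) :=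
    saturation_mono (image_mono subset_union_left)
  by_cases hρ : E.rhoUnit v ∈ E.rhoUnit '' Y
  · exact hmono (subset_saturation _ hρ)
  by_cases hσ : E.sigmaUnit v ∈ E.sigmaUnit '' Y
  · exact hmono (E.rhoUnit_mem_saturation_of_sigmaUnit_mem (subset_saturation _ hσ))
  · exact subset_saturation _ ⟨v, Or.inr ⟨⟨hv, hρ⟩, hσ⟩, rfl⟩

theorem IsCompactOpenSlice.exists_extension_within_biUnion (hS : S.IsAmple) (hT : T.IsAmple)
    {Y : Set Z} (hY : E.IsCompactOpenSlice Y) {ι : Type*} {V : ι → Set Z}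
    (hV : ∀ i, E.IsCompactOpenSlice (V i)) (t : Finset ι) :
    ∃ Y', E.IsCompactOpenSlice Y' ∧ Y ⊆ Y' ∧ Y' ⊆ Y ∪ ⋃ i ∈ t, V i ∧
      ∀ i ∈ t, E.rhoUnit '' V i ⊆ S.saturation (E.rhoUnit '' Y') := by
  classical
  induction t using Finset.induction_on with
  | empty => exact ⟨Y, hY, subset_rfl, subset_union_left, by simp⟩
  | insert i t _ ih =>
    obtain ⟨Y₁, hY₁, hYY₁, hY₁t, hcov₁⟩ := ih
    obtain ⟨Y₂, hY₂, hY₁Y₂, hY₂i, hcov₂⟩ := hY₁.exists_extension_within_union hS hT (hV i)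
    refine ⟨Y₂, hY₂, hYY₁.trans hY₁Y₂, ?_, ?_⟩
    · refine hY₂i.trans (union_subset (hY₁t.trans (union_subset_union_right Y ?_))
        (subset_union_right.trans (union_subset_union_right Y ?_)))
      · exact biUnion_mono (Finset.subset_insert i t) fun _ _ => subset_rfl
      · exact subset_biUnion_of_mem (u := V) (Finset.mem_insert_self i t)
    · intro j hj
      rcases Finset.mem_insert.mp hj with rfl | hj
      · exact hcov₂
      · exact (hcov₁ j hj).trans (saturation_mono (image_mono hY₁Y₂))

theorem IsCompactOpenSlice.exists_extension_covering (hS : S.IsAmple) (hT : T.IsAmple)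
    {Y : Set Z} (hY : E.IsCompactOpenSlice Y) {D : Set S.units} {D' : Set T.units}
    (hD : IsClosed D) (hD' : IsClosed D') (hDY : D ⊆ S.saturation (E.rhoUnit '' Y))
    (hD'Y : D' ⊆ T.saturation (E.sigmaUnit '' Y)) {C : Set S.units} (hC : IsCompact C) :
    ∃ Y', E.IsCompactOpenSlice Y' ∧ Y ⊆ Y' ∧ C ⊆ S.saturation (E.rhoUnit '' Y') ∧
      E.rhoUnit '' Y' ∩ D ⊆ E.rhoUnit '' Y ∧ E.sigmaUnit '' Y' ∩ D' ⊆ E.sigmaUnit '' Y := by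
  have hsat : ∀ {K : Set S.units}, IsOpen K → IsOpen (S.saturation K) :=
    isOpen_saturation hS.isLocalHomeomorph_rngMap.isOpenMap hS.isLocalHomeomorph_srcMap.continuous
  have hρo : ∀ {V : Set Z}, IsOpen V → IsOpen (E.rhoUnit '' V) :=
    E.isOpenMap_rhoUnit hT.isLocalHomeomorph_rngMap.isOpenMap _
  set O := E.rhoUnit ⁻¹' Dᶜ ∩ E.sigmaUnit ⁻¹' D'ᶜ
  have hO : IsOpen O := (hD.isOpen_compl.preimage E.continuous_rhoUnit).inter
    (hD'.isOpen_compl.preimage E.continuous_sigmaUnit)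
  have hslice : ∀ u ∈ C \ S.saturation (E.rhoUnit '' Y),
      ∃ V, E.IsCompactOpenSlice V ∧ u ∈ E.rhoUnit '' V ∧ V ⊆ O := by
    rintro u ⟨-, hu⟩
    obtain ⟨z, hz⟩ : ∃ z, E.ρ z = u := E.ρ_surj.symm.subset u.2
    have hzu : E.rhoUnit z = u := Subtype.ext hz
    have hzO : z ∈ O := ⟨fun h => hu (hzu ▸ hDY h),
      fun h => hu (hzu ▸ E.rhoUnit_mem_saturation_of_sigmaUnit_mem (hD'Y h))⟩
    obtain ⟨V, hV, hzV, hVO⟩ := E.exists_isCompactOpenSlice_mem_subset hS hT hO hzO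
    exact ⟨V, hV, ⟨z, hzV, hzu⟩, hVO⟩
  choose V hV huV hVO using hslice
  obtain ⟨t, ht⟩ := (hC.diff (hsat (hρo hY.isOpen))).elim_nhds_subcover'
    (fun u hu => S.saturation (E.rhoUnit '' V u hu))
    fun u hu => (hsat (hρo (hV u hu).isOpen)).mem_nhds (subset_saturation _ (huV u hu))
  obtain ⟨Y', hY', hYY', hY'V, hcov⟩ :=
    hY.exists_extension_within_biUnion hS hT
      (V := fun u : ↥(C \ S.saturation (E.rhoUnit '' Y)) => V u.1 u.2) (fun u => hV u.1 u.2) t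
  have hY'O : Y' ⊆ Y ∪ O := fun y hy => (hY'V hy).imp_right fun hy =>
    let ⟨i, _, hyi⟩ := mem_iUnion₂.mp hy
    hVO _ _ hyi
  refine ⟨Y', hY', hYY', fun u hu => ?_, ?_, ?_⟩
  · by_cases huY : u ∈ S.saturation (E.rhoUnit '' Y)
    · exact saturation_mono (image_mono hYY') huY
    · obtain ⟨i, hi, hui⟩ := mem_iUnion₂.mp (ht ⟨hu, huY⟩)
      exact saturation_subset_saturation (hcov i hi) hui
  · rintro _ ⟨⟨y, hy, rfl⟩, hyD⟩
    exact (hY'O hy).elim (mem_image_of_mem _) fun hyO => absurd hyD hyO.1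
  · rintro _ ⟨⟨y, hy, rfl⟩, hyD⟩
    exact (hY'O hy).elim (mem_image_of_mem _) fun hyO => absurd hyD hyO.2

theorem IsCompactOpenSlice.exists_extension_covering_both (hS : S.IsAmple) (hT : T.IsAmple)
    {Y : Set Z} (hY : E.IsCompactOpenSlice Y) {D : Set S.units} {D' : Set T.units}
    (hD : IsClosed D) (hD' : IsClosed D') (hDY : D ⊆ S.saturation (E.rhoUnit '' Y))
    (hD'Y : D' ⊆ T.saturation (E.sigmaUnit '' Y)) {C : Set S.units} {C' : Set T.units}
    (hC : IsCompact C) (hC' : IsCompact C') :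
    ∃ Y', E.IsCompactOpenSlice Y' ∧ Y ⊆ Y' ∧ C ⊆ S.saturation (E.rhoUnit '' Y') ∧
      C' ⊆ T.saturation (E.sigmaUnit '' Y') ∧
      E.rhoUnit '' Y' ∩ D ⊆ E.rhoUnit '' Y ∧ E.sigmaUnit '' Y' ∩ D' ⊆ E.sigmaUnit '' Y := by
  obtain ⟨Y₁, hY₁, hYY₁, hC₁, hD₁, hD'₁⟩ := hY.exists_extension_covering hS hT hD hD' hDY hD'Y hC
  obtain ⟨Y₂, hY₂, hY₁Y₂, hC'₂, hD'₂, hD₂⟩ :=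
    ((E.isCompactOpenSlice_symm_iff hS.continuous_inv hT.continuous_inv).mpr
      hY₁).exists_extension_covering hT hS hD' hD
      (hD'Y.trans (saturation_mono (image_mono hYY₁)))
      (hDY.trans (saturation_mono (image_mono hYY₁))) hC'
  exact ⟨Y₂, (E.isCompactOpenSlice_symm_iff _ _).mp hY₂, hYY₁.trans hY₁Y₂,
    hC₁.trans (saturation_mono (image_mono hY₁Y₂)), hC'₂,
    fun x hx => hD₁ ⟨hD₂ hx, hx.2⟩, fun x hx => hD'₁ ⟨hD'₂ hx, hx.2⟩⟩

variable (E)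

theorem exists_seq_isCompactOpenSlice (hS : S.IsAmple) (hT : T.IsAmple) {A : ℕ → Set S.units}
    {B : ℕ → Set T.units} (hA : ∀ n, IsCompact (A n)) (hB : ∀ n, IsCompact (B n)) :
    ∃ Y : ℕ → Set Z, (∀ n, E.IsCompactOpenSlice (Y n)) ∧ Monotone Y ∧
      (∀ n, A n ⊆ S.saturation (E.rhoUnit '' Y n)) ∧
      (∀ n, B n ⊆ T.saturation (E.sigmaUnit '' Y n)) ∧
      (∀ n, E.rhoUnit '' Y (n + 1) ∩ A n ⊆ E.rhoUnit '' Y n) ∧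
      (∀ n, E.sigmaUnit '' Y (n + 1) ∩ B n ⊆ E.sigmaUnit '' Y n) := by
  have := hS.t2_units
  have := hT.t2_units
  obtain ⟨Y₀, hY₀, -, hA₀, hB₀, -⟩ := E.isCompactOpenSlice_empty.exists_extension_covering_both
    hS hT isClosed_empty isClosed_empty (empty_subset _) (empty_subset _) (hA 0) (hB 0)
  obtain ⟨Y, hY, hstep⟩ := exists_seq_of_exists_succ
    (P := fun n Y => E.IsCompactOpenSlice Y ∧ A n ⊆ S.saturation (E.rhoUnit '' Y) ∧
      B n ⊆ T.saturation (E.sigmaUnit '' Y))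
    (R := fun n Y Y' => Y ⊆ Y' ∧ E.rhoUnit '' Y' ∩ A n ⊆ E.rhoUnit '' Y ∧
      E.sigmaUnit '' Y' ∩ B n ⊆ E.sigmaUnit '' Y)
    ⟨hY₀, hA₀, hB₀⟩ fun n Y ⟨hY, hAY, hBY⟩ => by
      obtain ⟨Y', hY', hYY', hAY', hBY', hρ, hσ⟩ := hY.exists_extension_covering_both hS hT
        (hA n).isClosed (hB n).isClosed hAY hBY (hA (n + 1)) (hB (n + 1))
      exact ⟨Y', ⟨hY', hAY', hBY'⟩, hYY', hρ, hσ⟩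
  exact ⟨Y, fun n => (hY n).1, monotone_nat_of_le_succ fun n => (hstep n).1, fun n => (hY n).2.1,
    fun n => (hY n).2.2, fun n => (hstep n).2.1, fun n => (hstep n).2.2⟩

theorem isUnitClopen_isFull_image_iUnion [T2Space S.units] (hT : IsOpenMap T.rngMap)
    {Y : ℕ → Set Z} (hY : ∀ n, E.IsCompactOpenSlice (Y n)) (hmono : Monotone Y)
    {A : ℕ → Set S.units} (hAmono : Monotone A) (hAo : ∀ n, IsOpen (A n))
    (hAcov : ⋃ n, A n = univ) (hYA : ∀ n, A n ⊆ S.saturation (E.rhoUnit '' Y n))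
    (hstab : ∀ n, E.rhoUnit '' Y (n + 1) ∩ A n ⊆ E.rhoUnit '' Y n) :
    S.IsUnitClopen (E.ρ '' ⋃ n, Y n) ∧ S.IsFull (E.ρ '' ⋃ n, Y n) := by
  have himage : E.ρ '' ⋃ n, Y n = Subtype.val '' ⋃ n, E.rhoUnit '' Y n := by
    rw [← image_iUnion, image_image]
    rfl
  rw [himage]
  refine ⟨isUnitClopen_image_val
    ⟨?_, isOpen_iUnion fun n => E.isOpenMap_rhoUnit hT _ (hY n).isOpen⟩,
    isFull_image_val_of_saturation_eq_univ (eq_univ_of_forall fun u => ?_)⟩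
  · exact isClosed_iUnion_of_inter_subset (fun m n h => image_mono (hmono h)) hAmono
      (fun n => ((hY n).isCompact.image E.continuous_rhoUnit).isClosed) hAo hAcov hstab
  · obtain ⟨n, hn⟩ := mem_iUnion.mp (hAcov ▸ mem_univ u)
    exact saturation_mono (subset_iUnion (fun n => E.rhoUnit '' Y n) n) (hYA n hn)

end GroupoidStruct.GroupoidEquivalenceData

open GroupoidStruct in
/-- If `Z` is an equivalence between ample groupoids `G` and `H` with σ-compact unit spaces,
then there is an open `Y ⊆ Z` on which both anchor maps are injective, such that `ρ(Y)` is
clopen in `G⁰` and `G`-full and `σ(Y)` is clopen in `H⁰` and `H`-full. -/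
theorem exists_full_bisection_in_equivalence
    {G : Type u} {H : Type v} {Z : Type w}
    [TopologicalSpace G] [TopologicalSpace H] [TopologicalSpace Z]
    (S : GroupoidStruct G) (T : GroupoidStruct H)
    (hS : S.IsAmple) (hT : T.IsAmple)
    (hSc : IsSigmaCompact S.units) (hTc : IsSigmaCompact T.units)
    (E : GroupoidEquivalenceData S T Z) :
    ∃ Y : Set Z, IsOpen Y ∧ Set.InjOn E.ρ Y ∧ Set.InjOn E.σ Y ∧
      S.IsUnitClopen (E.ρ '' Y) ∧ S.IsFull (E.ρ '' Y) ∧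
      T.IsUnitClopen (E.σ '' Y) ∧ T.IsFull (E.σ '' Y) := by
  have := hS.t2_units
  have := hT.t2_units
  obtain ⟨A, hAmono, hAc, hAo, hAcov⟩ := hS.exists_monotone_isCompact_isOpen_cover hSc
  obtain ⟨B, hBmono, hBc, hBo, hBcov⟩ := hT.exists_monotone_isCompact_isOpen_cover hTc
  obtain ⟨Y, hY, hmono, hYA, hYB, hstabA, hstabB⟩ := E.exists_seq_isCompactOpenSlice hS hT hAc hBc
  obtain ⟨hρc, hρf⟩ := E.isUnitClopen_isFull_image_iUnion hT.isLocalHomeomorph_rngMap.isOpenMap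
    hY hmono hAmono hAo hAcov hYA hstabA
  obtain ⟨hσc, hσf⟩ :=
    (E.symm hS.continuous_inv hT.continuous_inv).isUnitClopen_isFull_image_iUnion
      hS.isLocalHomeomorph_rngMap.isOpenMap
      (fun n => (E.isCompactOpenSlice_symm_iff _ _).mpr (hY n)) hmono hBmono hBo hBcov hYB hstabB
  exact ⟨⋃ n, Y n, isOpen_iUnion fun n => (hY n).isOpen,
    inj_on_iUnion_of_directed hmono.directed_le fun n => (hY n).injOn_ρ,
    inj_on_iUnion_of_directed hmono.directed_le fun n => (hY n).injOn_σ, hρc, hρf, hσc, hσf⟩
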